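/- Let Γ be a nonempty parameter-bounded family of Hénon-form maps. Then there exists R₀ > 0 such that for every γ ∈ Γ^ℤ, the set K_γ := K_γ⁺ ∩ K_γ⁻ is a nonempty compact subset of ℂ² contained in the closure of D_{R₀}. -/

import Mathlib

/-!
Uniformly over a parameter-bounded family, Condition (A) holds for one radius `R` with expansion
factor `2`: outside `D_R` the term `p(y)` dominates, so every map sends `closure V_R⁺` into `V_R⁺`
while at least doubling `|y|`, and every inverse does the same for `V_R⁻` and `|x|`. Hence an orbit
that ever enters `V_R⁺` going forward, or `V_R⁻` going backward, is unbounded, whereas a point whose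
orbits avoid both cones never leaves the closed bidisk of radius `R`. So `K_γ` is the intersection
of the nested closed sets of points whose orbits avoid the cones for `N` steps; each of these is
nonempty because an injective polynomial map of the line `x = 0` cannot land inside `V_R⁺`, and
compactness does the rest.
-/
open Complex Filter Set Topology MeasureTheory Bornology

noncomputable section

/-- A Hénon-form map `f(x,y) = (y + a, p(y) - δ x)` with `δ ≠ 0` and `deg p ≥ 2`. -/
structure HenonMap : Type where
  a : ℂ
  δ : ℂ
  p : Polynomial ℂ
  hδ : δ ≠ 0
  hdeg : 2 ≤ p.natDegree

namespace HenonMap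

/-- The map itself. -/
def toFun (f : HenonMap) (z : ℂ × ℂ) : ℂ × ℂ :=
  (z.2 + f.a, f.p.eval z.2 - f.δ * z.1)

/-- The inverse map `f⁻¹(x,y) = (δ⁻¹ (p(x - a) - y), x - a)`. -/
def invFun (f : HenonMap) (z : ℂ × ℂ) : ℂ × ℂ :=
  (f.δ⁻¹ * (f.p.eval (z.1 - f.a) - z.2), z.1 - f.a)

end HenonMap

/-- `V_R⁺ = {(x,y) : max(R,|x|) < |y|}`. -/
def VPlus (R : ℝ) : Set (ℂ × ℂ) := {z | max R (‖z.1‖) < ‖z.2‖}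

/-- `V_R⁻ = {(x,y) : max(R,|y|) < |x|}`. -/
def VMinus (R : ℝ) : Set (ℂ × ℂ) := {z | max R (‖z.2‖) < ‖z.1‖}

/-- `D_R = {(x,y) : max(|x|,|y|) < R}`. -/
def DDisk (R : ℝ) : Set (ℂ × ℂ) := {z | max (‖z.1‖) (‖z.2‖) < R}

/-- Condition (A) for `(R, ρ)`. -/
def CondA (f : HenonMap) (R ρ : ℝ) : Prop :=
  (∀ z ∈ closure (VPlus R),
    f.toFun z ∈ VPlus R ∧ ρ * ‖z.2‖ < ‖(f.toFun z).2‖) ∧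
  (∀ z ∈ closure (VMinus R),
    f.invFun z ∈ VMinus R ∧ ρ * ‖z.1‖ < ‖(f.invFun z).1‖)

/-- A parameter-bounded family of Hénon-form maps. -/
def ParamBounded (Γ : Set HenonMap) : Prop :=
  ∃ (D : ℕ) (A d₀ Δ m M : ℝ),
    2 ≤ D ∧ 0 ≤ A ∧ 0 < d₀ ∧ d₀ ≤ Δ ∧ 0 < m ∧ m ≤ M ∧
    ∀ f ∈ Γ,
      f.p.natDegree ≤ D ∧ ‖f.a‖ ≤ A ∧
      d₀ ≤ ‖f.δ‖ ∧ ‖f.δ‖ ≤ Δ ∧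
      (∀ i : ℕ, ‖f.p.coeff i‖ ≤ M) ∧
      m ≤ ‖f.p.leadingCoeff‖

/-- Forward composition: `fwd γ n = γ_{n-1} ∘ ⋯ ∘ γ₀`. -/
def fwd (γ : ℤ → HenonMap) : ℕ → (ℂ × ℂ) → ℂ × ℂ
  | 0 => id
  | n + 1 => fun z => (γ (n : ℤ)).toFun (fwd γ n z)

/-- Backward composition: `bwd γ n = γ_{-n}⁻¹ ∘ ⋯ ∘ γ_{-1}⁻¹`. -/
def bwd (γ : ℤ → HenonMap) : ℕ → (ℂ × ℂ) → ℂ × ℂ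
  | 0 => id
  | n + 1 => fun z => (γ (-((n : ℤ) + 1))).invFun (bwd γ n z)

/-- `K_γ⁺` : points with bounded forward orbit. -/
def KPlus (γ : ℤ → HenonMap) : Set (ℂ × ℂ) :=
  {z | IsBounded (Set.range fun n : ℕ => fwd γ n z)}

/-- `K_γ⁻` : points with bounded backward orbit. -/
def KMinus (γ : ℤ → HenonMap) : Set (ℂ × ℂ) :=
  {z | IsBounded (Set.range fun n : ℕ => bwd γ n z)}

/-- `I_γ⁺` : points whose forward orbit tends to infinity in norm. -/
def IPlus (γ : ℤ → HenonMap) : Set (ℂ × ℂ) :=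
  {z | Tendsto (fun n : ℕ => ‖fwd γ n z‖) atTop atTop}

/-- `I_γ⁻` : points whose backward orbit tends to infinity in norm. -/
def IMinus (γ : ℤ → HenonMap) : Set (ℂ × ℂ) :=
  {z | Tendsto (fun n : ℕ => ‖bwd γ n z‖) atTop atTop}

/-- The iterated shift: `(σⁿ γ)_j = γ_{j+n}`. -/
def shiftIter (γ : ℤ → HenonMap) (n : ℕ) : ℤ → HenonMap := fun j => γ (j + n)

/-- `log⁺ t = max (log t) 0`. -/
def logPlus (t : ℝ) : ℝ := max (Real.log t) 0

/-- `G_{γ,n}⁺(z) = (deg γ_{n-1} ⋯ deg γ₀)⁻¹ log⁺ ‖γ_{n-1} ∘ ⋯ ∘ γ₀ (z)‖`. -/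
def GPlusN (γ : ℤ → HenonMap) (n : ℕ) (z : ℂ × ℂ) : ℝ :=
  (∏ j ∈ Finset.range n, ((γ (j : ℤ)).p.natDegree : ℝ))⁻¹ * logPlus ‖fwd γ n z‖

/-- `G_{γ,n}⁻(z) = (deg γ_{-1} ⋯ deg γ_{-n})⁻¹ log⁺ ‖γ_{-n}⁻¹ ∘ ⋯ ∘ γ_{-1}⁻¹ (z)‖`. -/
def GMinusN (γ : ℤ → HenonMap) (n : ℕ) (z : ℂ × ℂ) : ℝ :=
  (∏ j ∈ Finset.range n, ((γ (-((j : ℤ) + 1))).p.natDegree : ℝ))⁻¹ * logPlus ‖bwd γ n z‖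

open Polynomial

namespace HenonMap

variable (f : HenonMap)

@[simp]
lemma invFun_toFun (z : ℂ × ℂ) : f.invFun (f.toFun z) = z := by
  ext <;> simp [toFun, invFun, f.hδ]

@[simp]
lemma toFun_invFun (z : ℂ × ℂ) : f.toFun (f.invFun z) = z := by
  ext <;> simp [toFun, invFun, f.hδ]

lemma toFun_injective : Function.Injective f.toFun :=
  Function.LeftInverse.injective f.invFun_toFun

lemma continuous_toFun : Continuous f.toFun := by
  unfold toFun
  fun_prop

lemma continuous_invFun : Continuous f.invFun := by
  unfold invFun
  fun_prop

end HenonMap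

lemma isOpen_VPlus (R : ℝ) : IsOpen (VPlus R) :=
  isOpen_lt (by fun_prop) (by fun_prop)

lemma isOpen_VMinus (R : ℝ) : IsOpen (VMinus R) :=
  isOpen_lt (by fun_prop) (by fun_prop)

lemma VMinus_eq_preimage_swap (R : ℝ) : VMinus R = Prod.swap ⁻¹' VPlus R := rfl

lemma closure_VPlus {R : ℝ} (hR : 0 < R) :
    closure (VPlus R) = {z | R ≤ ‖z.2‖ ∧ ‖z.1‖ ≤ ‖z.2‖} := by
  apply subset_antisymm
  · have hcl : IsClosed {z : ℂ × ℂ | R ≤ ‖z.2‖ ∧ ‖z.1‖ ≤ ‖z.2‖} :=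
      (isClosed_le continuous_const continuous_snd.norm).inter
        (isClosed_le continuous_fst.norm continuous_snd.norm)
    refine closure_minimal (fun z hz => ?_) hcl
    exact ⟨(le_max_left _ _).trans hz.le, (le_max_right _ _).trans hz.le⟩
  · rintro z ⟨hRz, hz⟩
    have hlim : Tendsto (fun c : ℝ => (z.1, (c : ℂ) * z.2)) (𝓝[>] 1) (𝓝 z) := by
      apply tendsto_nhdsWithin_of_tendsto_nhds
      simpa using (show Continuous fun c : ℝ => (z.1, (c : ℂ) * z.2) by fun_prop).tendsto 1
    refine mem_closure_of_tendsto hlim (eventually_nhdsWithin_of_forall fun c (hc : 1 < c) => ?_)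
    show max R ‖z.1‖ < ‖(c : ℂ) * z.2‖
    rw [norm_mul, Complex.norm_real, Real.norm_of_nonneg (by linarith)]
    exact max_lt (by nlinarith) (by nlinarith)

lemma closure_VMinus {R : ℝ} (hR : 0 < R) :
    closure (VMinus R) = {z | R ≤ ‖z.1‖ ∧ ‖z.2‖ ≤ ‖z.1‖} := by
  rw [VMinus_eq_preimage_swap, ← Homeomorph.coe_prodComm, ← Homeomorph.preimage_closure,
    closure_VPlus hR]
  rfl

lemma closure_DDisk {R : ℝ} (hR : 0 < R) : closure (DDisk R) = Metric.closedBall 0 R := by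
  have hball : DDisk R = Metric.ball 0 R := by
    ext z
    simp [DDisk, Prod.norm_def]
  rw [hball, closure_ball _ hR.ne']

lemma Polynomial.sub_le_norm_eval {𝕜 : Type*} [NormedField 𝕜] (p : 𝕜[X]) {M : ℝ}
    (hM : ∀ i, ‖p.coeff i‖ ≤ M) {w : 𝕜} (hw : 1 ≤ ‖w‖) :
    ‖p.leadingCoeff‖ * ‖w‖ ^ p.natDegree - p.natDegree * M * ‖w‖ ^ (p.natDegree - 1)
      ≤ ‖p.eval w‖ := by
  set d := p.natDegree
  set tail := ∑ i ∈ Finset.range d, p.coeff i * w ^ i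
  have hlead : p.leadingCoeff * w ^ d = p.eval w - tail := by
    simp only [tail, d, eval_eq_sum_range, Finset.sum_range_succ, leadingCoeff]
    ring
  have htail : ‖tail‖ ≤ d * M * ‖w‖ ^ (d - 1) := by
    calc ‖tail‖ ≤ ∑ i ∈ Finset.range d, ‖p.coeff i * w ^ i‖ := norm_sum_le _ _
      _ ≤ ∑ _i ∈ Finset.range d, M * ‖w‖ ^ (d - 1) := by
        refine Finset.sum_le_sum fun i hi => ?_
        rw [norm_mul, norm_pow]
        exact mul_le_mul (hM i) (pow_le_pow_right₀ hw (by grind))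
          (by positivity) ((norm_nonneg _).trans (hM 0))
      _ = d * M * ‖w‖ ^ (d - 1) := by simp [mul_assoc]
  have := norm_sub_le (p.eval w) tail
  rw [← hlead, norm_mul, norm_pow] at this
  linarith

lemma Polynomial.mul_sub_le_norm_eval {𝕜 : Type*} [NormedField 𝕜] (p : 𝕜[X]) {D : ℕ} {m M : ℝ}
    (hdeg : 2 ≤ p.natDegree) (hD : p.natDegree ≤ D) (hM : ∀ i, ‖p.coeff i‖ ≤ M)
    (hm : m ≤ ‖p.leadingCoeff‖) {w : 𝕜} (hw : 1 ≤ ‖w‖) (hmw : D * M ≤ m * ‖w‖) :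
    ‖w‖ * (m * ‖w‖ - D * M) ≤ ‖p.eval w‖ := by
  set t := ‖w‖
  set d := p.natDegree
  have hM0 : 0 ≤ M := (norm_nonneg _).trans (hM 0)
  calc t * (m * t - D * M) ≤ t ^ (d - 1) * (m * t - D * M) :=
        mul_le_mul_of_nonneg_right (le_self_pow₀ hw (by omega)) (by linarith)
    _ ≤ t ^ (d - 1) * (‖p.leadingCoeff‖ * t - d * M) := by
        gcongr
    _ = ‖p.leadingCoeff‖ * t ^ d - d * M * t ^ (d - 1) := by
        rw [show d = d - 1 + 1 by omega, pow_succ, Nat.add_sub_cancel]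
        ring
    _ ≤ ‖p.eval w‖ := p.sub_le_norm_eval hM hw

namespace HenonMap

variable {f : HenonMap} {D : ℕ} {A Δ m M R : ℝ}

lemma toFun_mem_VPlus (hD : f.p.natDegree ≤ D) (hM : ∀ i, ‖f.p.coeff i‖ ≤ M)
    (hm : m ≤ ‖f.p.leadingCoeff‖) (hΔ : ‖f.δ‖ ≤ Δ) (hA : ‖f.a‖ ≤ A) (hRA : 2 + 2 * A ≤ R)
    (hRm : 2 * (D * M) + 12 * Δ + 4 ≤ m * R) {z : ℂ × ℂ} (hz : R ≤ ‖z.2‖)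
    (hzx : ‖z.1‖ ≤ ‖z.2‖) :
    f.toFun z ∈ VPlus R ∧ 2 * ‖z.2‖ < ‖(f.toFun z).2‖ := by
  set t := ‖z.2‖
  have hM0 : 0 ≤ M := (norm_nonneg _).trans (hM 0)
  have hΔ0 : 0 ≤ Δ := (norm_nonneg _).trans hΔ
  have hA0 : 0 ≤ A := (norm_nonneg _).trans hA
  have hDM : 0 ≤ (D : ℝ) * M := by positivity
  have hm0 : 0 < m := by nlinarith
  have hmt : m * R ≤ m * t := mul_le_mul_of_nonneg_left hz hm0.le
  have hpoly : t * (m * t - D * M) ≤ ‖f.p.eval z.2‖ :=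
    f.p.mul_sub_le_norm_eval f.hdeg hD hM hm (by linarith) (by linarith)
  have hδx : ‖f.δ * z.1‖ ≤ Δ * t := by
    rw [norm_mul]
    exact mul_le_mul hΔ hzx (norm_nonneg _) hΔ0
  have hsnd : ‖f.p.eval z.2‖ - ‖f.δ * z.1‖ ≤ ‖(f.toFun z).2‖ := norm_sub_norm_le _ _
  have h4t : 4 * t ≤ ‖(f.toFun z).2‖ := by
    nlinarith [mul_nonneg (by linarith : (0 : ℝ) ≤ t) (by linarith : 0 ≤ m * t - D * M - Δ - 4)]
  have hfst : ‖(f.toFun z).1‖ ≤ t + A := (norm_add_le _ _).trans (by linarith)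
  refine ⟨?_, by linarith⟩
  show max R ‖(f.toFun z).1‖ < ‖(f.toFun z).2‖
  exact max_lt (by linarith) (by linarith)

lemma invFun_mem_VMinus (hD : f.p.natDegree ≤ D) (hM : ∀ i, ‖f.p.coeff i‖ ≤ M)
    (hm : m ≤ ‖f.p.leadingCoeff‖) (hΔ : ‖f.δ‖ ≤ Δ) (hA : ‖f.a‖ ≤ A) (hRA : 2 + 2 * A ≤ R)
    (hRm : 2 * (D * M) + 12 * Δ + 4 ≤ m * R) {z : ℂ × ℂ} (hz : R ≤ ‖z.1‖)
    (hzy : ‖z.2‖ ≤ ‖z.1‖) :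
    f.invFun z ∈ VMinus R ∧ 2 * ‖z.1‖ < ‖(f.invFun z).1‖ := by
  set t := ‖z.1‖
  set s := ‖z.1 - f.a‖
  have hM0 : 0 ≤ M := (norm_nonneg _).trans (hM 0)
  have hΔ0 : 0 ≤ Δ := (norm_nonneg _).trans hΔ
  have hA0 : 0 ≤ A := (norm_nonneg _).trans hA
  have hDM : 0 ≤ (D : ℝ) * M := by positivity
  have hm0 : 0 < m := by nlinarith
  have hs_lo : t - A ≤ s := by linarith [norm_sub_norm_le z.1 f.a]
  have hs_hi : s ≤ t + A := (norm_sub_le _ _).trans (by linarith)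
  have hs : t / 2 + 1 ≤ s := by linarith
  have hms : 6 * Δ + 2 ≤ m * s - D * M := by nlinarith
  have hpoly : s * (m * s - D * M) ≤ ‖f.p.eval (z.1 - f.a)‖ :=
    f.p.mul_sub_le_norm_eval f.hdeg hD hM hm (by linarith) (by linarith)
  have hnum : ‖f.δ‖ * (3 * t) ≤ ‖f.p.eval (z.1 - f.a) - z.2‖ := by
    have := norm_sub_norm_le (f.p.eval (z.1 - f.a)) z.2
    have : (t / 2) * (6 * Δ + 2) ≤ s * (m * s - D * M) :=
      mul_le_mul (by linarith) hms (by positivity) (by linarith)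
    nlinarith [mul_le_mul_of_nonneg_right hΔ (by linarith : (0 : ℝ) ≤ 3 * t)]
  have h3t : 3 * t ≤ ‖(f.invFun z).1‖ := by
    rw [show ‖(f.invFun z).1‖ = ‖f.δ‖⁻¹ * ‖f.p.eval (z.1 - f.a) - z.2‖ by
      simp [invFun]]
    exact (le_inv_mul_iff₀ (norm_pos_iff.2 f.hδ)).2 hnum
  refine ⟨?_, by linarith⟩
  show max R s < ‖(f.invFun z).1‖
  exact max_lt (by linarith) (by linarith)

end HenonMap

lemma ParamBounded.exists_condA {Γ : Set HenonMap} (hΓ : ParamBounded Γ) :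
    ∃ R > 0, ∀ f ∈ Γ, CondA f R 2 := by
  obtain ⟨D, A, d₀, Δ, m, M, -, hA0, hd₀, hd₀Δ, hm0, hmM, hbound⟩ := hΓ
  have hM0 : 0 ≤ M := by linarith
  have hΔ0 : 0 ≤ Δ := by linarith
  set R := 2 + 2 * A + (2 * (D * M) + 12 * Δ + 4) / m
  have hRA : 2 + 2 * A ≤ R := le_add_of_nonneg_right (by positivity)
  have hRm : 2 * (D * M) + 12 * Δ + 4 ≤ m * R := by
    rw [mul_add, mul_div_cancel₀ _ hm0.ne']
    nlinarith
  have hR : 0 < R := by positivity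
  refine ⟨R, hR, fun f hf => ?_⟩
  obtain ⟨hD, hA, -, hΔ, hM, hm⟩ := hbound f hf
  refine ⟨fun z hz => ?_, fun z hz => ?_⟩
  · rw [closure_VPlus hR] at hz
    exact HenonMap.toFun_mem_VPlus hD hM hm hΔ hA hRA hRm hz.1 hz.2
  · rw [closure_VMinus hR] at hz
    exact HenonMap.invFun_mem_VMinus hD hM hm hΔ hA hRA hRm hz.1 hz.2

namespace CondA

variable {f : HenonMap} {R ρ : ℝ}

lemma mem_VMinus_of_toFun_mem (hf : CondA f R ρ) {z : ℂ × ℂ} (h : f.toFun z ∈ VMinus R) :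
    z ∈ VMinus R := by
  simpa using (hf.2 _ (subset_closure h)).1

lemma mem_VPlus_of_invFun_mem (hf : CondA f R ρ) {z : ℂ × ℂ} (h : f.invFun z ∈ VPlus R) :
    z ∈ VPlus R := by
  simpa using (hf.1 _ (subset_closure h)).1

lemma norm_le_of_notMem_VMinus (hf : CondA f R ρ) (hR : 0 < R) {z : ℂ × ℂ}
    (hz : z ∉ VMinus R) (hfz : f.toFun z ∉ VPlus R) : ‖z‖ ≤ R := by
  by_contra! h
  rw [Prod.norm_def] at h
  rcases le_or_gt ‖z.1‖ ‖z.2‖ with hle | hlt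
  · rw [max_eq_right hle] at h
    exact hfz (hf.1 z (by rw [closure_VPlus hR]; exact ⟨h.le, hle⟩)).1
  · rw [max_eq_left hlt.le] at h
    exact hz (max_lt h hlt)

lemma norm_le_of_notMem_VPlus (hf : CondA f R ρ) (hR : 0 < R) {z : ℂ × ℂ}
    (hz : z ∉ VPlus R) (hfz : f.invFun z ∉ VMinus R) : ‖z‖ ≤ R := by
  by_contra! h
  rw [Prod.norm_def] at h
  rcases le_or_gt ‖z.2‖ ‖z.1‖ with hle | hlt
  · rw [max_eq_left hle] at h
    exact hfz (hf.2 z (by rw [closure_VMinus hR]; exact ⟨h.le, hle⟩)).1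
  · rw [max_eq_right hlt.le] at h
    exact hz (max_lt h hlt)

end CondA

lemma not_isBounded_range_of_expanding {E : Type*} [SeminormedAddCommGroup E] {u : ℕ → E}
    {s : Set E} {φ : E → ℝ} {ρ R : ℝ} (hρ : 1 < ρ) (hR : 0 < R)
    (hφ : ∀ x ∈ s, R ≤ φ x ∧ φ x ≤ ‖x‖)
    (hu : ∀ n, u n ∈ s → u (n + 1) ∈ s ∧ ρ * φ (u n) < φ (u (n + 1))) {n : ℕ} (hn : u n ∈ s) :
    ¬IsBounded (range u) := by
  have hgrow : ∀ k, u (n + k) ∈ s ∧ ρ ^ k * R ≤ φ (u (n + k)) := by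
    intro k
    induction k with
    | zero => simpa using ⟨hn, (hφ _ hn).1⟩
    | succ k ih =>
      obtain ⟨hs, hlt⟩ := hu _ ih.1
      refine ⟨hs, ?_⟩
      calc ρ ^ (k + 1) * R = ρ * (ρ ^ k * R) := by ring
        _ ≤ ρ * φ (u (n + k)) := mul_le_mul_of_nonneg_left ih.2 (by linarith)
        _ ≤ φ (u (n + (k + 1))) := hlt.le
  intro hb
  obtain ⟨C, hC⟩ := isBounded_iff_forall_norm_le.1 hb
  obtain ⟨k, hk⟩ := pow_unbounded_of_one_lt (C / R) hρ
  rw [div_lt_iff₀ hR] at hk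
  linarith [(hgrow k).2, (hφ _ (hgrow k).1).2, hC _ ⟨n + k, rfl⟩]

lemma fwd_succ (γ : ℤ → HenonMap) (n : ℕ) (z : ℂ × ℂ) :
    fwd γ (n + 1) z = (γ n).toFun (fwd γ n z) := rfl

lemma bwd_succ (γ : ℤ → HenonMap) (n : ℕ) (z : ℂ × ℂ) :
    bwd γ (n + 1) z = (γ (-((n : ℤ) + 1))).invFun (bwd γ n z) := rfl

lemma continuous_fwd (γ : ℤ → HenonMap) (n : ℕ) : Continuous (fwd γ n) := by
  induction n with
  | zero => exact continuous_id
  | succ n ih => exact (γ n).continuous_toFun.comp ih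

lemma continuous_bwd (γ : ℤ → HenonMap) (n : ℕ) : Continuous (bwd γ n) := by
  induction n with
  | zero => exact continuous_id
  | succ n ih => exact (γ _).continuous_invFun.comp ih

lemma fwd_injective (γ : ℤ → HenonMap) (n : ℕ) : Function.Injective (fwd γ n) := by
  induction n with
  | zero => exact Function.injective_id
  | succ n ih => exact (γ n).toFun_injective.comp ih

lemma fwd_add (γ : ℤ → HenonMap) (m n : ℕ) (z : ℂ × ℂ) :
    fwd γ (m + n) z = fwd (shiftIter γ m) n (fwd γ m z) := by
  induction n with
  | zero => rfl
  | succ n ih =>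
    rw [← add_assoc, fwd_succ, fwd_succ, ih, shiftIter]
    push_cast
    rw [add_comm (n : ℤ)]

lemma bwd_shiftIter_fwd (γ : ℤ → HenonMap) {n k : ℕ} (hk : k ≤ n) (z : ℂ × ℂ) :
    bwd (shiftIter γ n) k (fwd γ n z) = fwd γ (n - k) z := by
  induction k with
  | zero => rfl
  | succ k ih =>
    rw [bwd_succ, ih (by omega), show n - k = n - (k + 1) + 1 by omega, fwd_succ, shiftIter]
    convert (γ _).invFun_toFun _ using 4
    push_cast [Nat.cast_sub (show k + 1 ≤ n from hk)]
    ring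

lemma exists_fwd_zero_eq_eval (γ : ℤ → HenonMap) (n : ℕ) :
    ∃ P Q : ℂ[X], ∀ t, fwd γ n (0, t) = (P.eval t, Q.eval t) := by
  induction n with
  | zero => exact ⟨0, X, fun t => by simp [fwd]⟩
  | succ n ih =>
    obtain ⟨P, Q, h⟩ := ih
    refine ⟨Q + C (γ n).a, (γ n).p.comp Q - C (γ n).δ * P, fun t => ?_⟩
    simp [fwd_succ, h, HenonMap.toFun]

-- `t ↦ fwd γ n (0, t)` is polynomial and injective, so it cannot map `ℂ` into the cone `|x| < |y|`.
lemma exists_norm_snd_fwd_le (γ : ℤ → HenonMap) (n : ℕ) :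
    ∃ t : ℂ, ‖(fwd γ n (0, t)).2‖ ≤ ‖(fwd γ n (0, t)).1‖ := by
  obtain ⟨P, Q, hPQ⟩ := exists_fwd_zero_eq_eval γ n
  by_contra! hlt
  simp only [hPQ] at hlt
  have hQ : Q = C (Q.coeff 0) := by
    refine eq_C_of_degree_le_zero (not_lt.1 fun hdeg => ?_)
    obtain ⟨t, ht⟩ := Complex.exists_root hdeg
    simpa [ht.eq_zero] using (norm_nonneg _).trans_lt (hlt t)
  have hP : P = C (P.coeff 0) := by
    refine eq_C_of_degree_le_zero (not_lt.1 fun hdeg => ?_)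
    obtain ⟨t, ht⟩ := Complex.exists_root (f := P - C (Q.coeff 0)) (by rwa [degree_sub_C hdeg])
    have := hlt t
    rw [hQ, eval_C, show P.eval t = Q.coeff 0 by simpa [sub_eq_zero] using ht.eq_zero] at this
    exact lt_irrefl _ this
  have h01 := fwd_injective γ n (a₁ := (0, 0)) (a₂ := (0, 1)) (by rw [hPQ, hPQ, hP, hQ]; simp)
  simp at h01

section Trapped

variable {γ : ℤ → HenonMap} {R ρ : ℝ}

lemma fwd_notMem_VMinus (hA : ∀ j, CondA (γ j) R ρ) {z : ℂ × ℂ} (hz : z ∉ VMinus R) (n : ℕ) :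
    fwd γ n z ∉ VMinus R := by
  induction n with
  | zero => exact hz
  | succ n ih => exact fun h => ih ((hA n).mem_VMinus_of_toFun_mem h)

lemma bwd_notMem_VPlus (hA : ∀ j, CondA (γ j) R ρ) {z : ℂ × ℂ} (hz : z ∉ VPlus R) (n : ℕ) :
    bwd γ n z ∉ VPlus R := by
  induction n with
  | zero => exact hz
  | succ n ih => exact fun h => ih ((hA _).mem_VPlus_of_invFun_mem h)

lemma fwd_mem_VPlus_of_le (hA : ∀ j, CondA (γ j) R ρ) {z : ℂ × ℂ} {j n : ℕ} (hjn : j ≤ n)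
    (hj : fwd γ j z ∈ VPlus R) : fwd γ n z ∈ VPlus R := by
  induction n, hjn using Nat.le_induction with
  | base => exact hj
  | succ n _ ih => exact ((hA n).1 _ (subset_closure ih)).1

lemma notMem_KPlus_of_fwd_mem_VPlus (hA : ∀ j, CondA (γ j) R ρ) (hρ : 1 < ρ) (hR : 0 < R)
    {z : ℂ × ℂ} {n : ℕ} (hn : fwd γ n z ∈ VPlus R) : z ∉ KPlus γ :=
  not_isBounded_range_of_expanding (φ := fun w => ‖w.2‖) hρ hR
    (fun w hw => ⟨(le_max_left _ _).trans hw.le, norm_snd_le w⟩)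
    (fun n hn => (hA n).1 _ (subset_closure hn)) hn

lemma notMem_KMinus_of_bwd_mem_VMinus (hA : ∀ j, CondA (γ j) R ρ) (hρ : 1 < ρ) (hR : 0 < R)
    {z : ℂ × ℂ} {n : ℕ} (hn : bwd γ n z ∈ VMinus R) : z ∉ KMinus γ :=
  not_isBounded_range_of_expanding (φ := fun w => ‖w.1‖) hρ hR
    (fun w hw => ⟨(le_max_left _ _).trans hw.le, norm_fst_le w⟩)
    (fun _ hn => (hA _).2 _ (subset_closure hn)) hn

variable (γ R) in
def trappedUpTo (N : ℕ) : Set (ℂ × ℂ) :=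
  {z | ∀ k ≤ N, fwd γ k z ∉ VPlus R ∧ bwd γ k z ∉ VMinus R}

lemma isClosed_trappedUpTo (N : ℕ) : IsClosed (trappedUpTo γ R N) := by
  simp only [trappedUpTo, ofPred_forall]
  exact isClosed_iInter fun k => isClosed_iInter fun _ =>
    ((isOpen_VPlus R).isClosed_compl.preimage (continuous_fwd γ k)).inter
      ((isOpen_VMinus R).isClosed_compl.preimage (continuous_bwd γ k))

lemma trappedUpTo_succ_subset (N : ℕ) : trappedUpTo γ R (N + 1) ⊆ trappedUpTo γ R N :=
  fun _ hz k hk => hz k (hk.trans N.le_succ)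

lemma trappedUpTo_one_subset_closedBall (hA : ∀ j, CondA (γ j) R ρ) (hR : 0 < R) :
    trappedUpTo γ R 1 ⊆ Metric.closedBall 0 R := fun _ hz =>
  mem_closedBall_zero_iff.2 <|
    (hA 0).norm_le_of_notMem_VMinus hR (hz 0 zero_le_one).2 (hz 1 le_rfl).1

-- Shift the sequence back by `N` and follow the orbit of a point of the line `x = 0`,
-- which never enters `V_R⁻` and avoids `V_R⁺` for `2N` steps; its `N`-th iterate is trapped.
lemma trappedUpTo_nonempty (hA : ∀ j, CondA (γ j) R ρ) (N : ℕ) :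
    (trappedUpTo γ R N).Nonempty := by
  set σ : ℤ → HenonMap := fun j => γ (j - N)
  have hσ : shiftIter σ N = γ := funext fun j => by simp [σ, shiftIter]
  have hAσ : ∀ j, CondA (σ j) R ρ := fun j => hA _
  obtain ⟨t, ht⟩ := exists_norm_snd_fwd_le σ (2 * N)
  have hP : ∀ j ≤ 2 * N, fwd σ j (0, t) ∉ VPlus R := fun j hj h =>
    ((le_max_right _ _).trans_lt (fwd_mem_VPlus_of_le hAσ hj h)).not_ge ht
  have hM : ∀ k, fwd σ k (0, t) ∉ VMinus R :=
    fwd_notMem_VMinus hAσ fun h => (norm_nonneg t).not_gt (by simpa [VMinus] using h : R < 0 ∧ ‖t‖ < 0).2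
  refine ⟨fwd σ N (0, t), fun k hk => ⟨?_, ?_⟩⟩
  · rw [← hσ, ← fwd_add]
    exact hP _ (by omega)
  · rw [← hσ, bwd_shiftIter_fwd σ hk]
    exact hM _

lemma KPlus_inter_KMinus_eq_iInter (hA : ∀ j, CondA (γ j) R ρ) (hρ : 1 < ρ) (hR : 0 < R) :
    KPlus γ ∩ KMinus γ = ⋂ N, trappedUpTo γ R (N + 1) := by
  ext z
  simp only [mem_inter_iff, mem_iInter, KPlus, KMinus, mem_ofPred_eq]
  constructor
  · rintro ⟨hp, hm⟩ N k -
    exact ⟨fun h => notMem_KPlus_of_fwd_mem_VPlus hA hρ hR h hp,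
      fun h => notMem_KMinus_of_bwd_mem_VMinus hA hρ hR h hm⟩
  · intro hz
    have hz₀ := hz 0 0 (Nat.zero_le _)
    refine ⟨isBounded_iff_forall_norm_le.2 ⟨R, ?_⟩, isBounded_iff_forall_norm_le.2 ⟨R, ?_⟩⟩
    · rintro _ ⟨n, rfl⟩
      exact (hA n).norm_le_of_notMem_VMinus hR (fwd_notMem_VMinus hA hz₀.2 n) (hz n _ le_rfl).1
    · rintro _ ⟨n, rfl⟩
      exact (hA _).norm_le_of_notMem_VPlus hR (bwd_notMem_VPlus hA hz₀.1 n) (hz n _ le_rfl).2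

lemma KPlus_inter_KMinus_subset_closedBall (hA : ∀ j, CondA (γ j) R ρ) (hρ : 1 < ρ)
    (hR : 0 < R) : KPlus γ ∩ KMinus γ ⊆ Metric.closedBall 0 R := by
  rw [KPlus_inter_KMinus_eq_iInter hA hρ hR]
  exact (iInter_subset _ 0).trans (trappedUpTo_one_subset_closedBall hA hR)

lemma isCompact_KPlus_inter_KMinus (hA : ∀ j, CondA (γ j) R ρ) (hρ : 1 < ρ) (hR : 0 < R) :
    IsCompact (KPlus γ ∩ KMinus γ) := by
  refine (isCompact_closedBall 0 R).of_isClosed_subset ?_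
    (KPlus_inter_KMinus_subset_closedBall hA hρ hR)
  rw [KPlus_inter_KMinus_eq_iInter hA hρ hR]
  exact isClosed_iInter fun N => isClosed_trappedUpTo _

lemma KPlus_inter_KMinus_nonempty (hA : ∀ j, CondA (γ j) R ρ) (hρ : 1 < ρ) (hR : 0 < R) :
    (KPlus γ ∩ KMinus γ).Nonempty := by
  rw [KPlus_inter_KMinus_eq_iInter hA hρ hR]
  exact IsCompact.nonempty_iInter_of_sequence_nonempty_isCompact_isClosed _
    (fun N => trappedUpTo_succ_subset _) (fun N => trappedUpTo_nonempty hA _)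
    ((isCompact_closedBall 0 R).of_isClosed_subset (isClosed_trappedUpTo 1)
      (trappedUpTo_one_subset_closedBall hA hR))
    (fun N => isClosed_trappedUpTo _)

end Trapped

theorem stmt_16_general (Γ : Set HenonMap) (hΓ : ParamBounded Γ) :
    ∃ R₀ : ℝ, 0 < R₀ ∧ ∀ γ : ℤ → HenonMap, (∀ j : ℤ, γ j ∈ Γ) →
      (KPlus γ ∩ KMinus γ).Nonempty ∧ IsCompact (KPlus γ ∩ KMinus γ) ∧
      KPlus γ ∩ KMinus γ ⊆ closure (DDisk R₀) := by
  obtain ⟨R, hR, hΓR⟩ := hΓ.exists_condA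
  refine ⟨R, hR, fun γ hγ => ?_⟩
  have hA : ∀ j, CondA (γ j) R 2 := fun j => hΓR _ (hγ j)
  rw [closure_DDisk hR]
  exact ⟨KPlus_inter_KMinus_nonempty hA one_lt_two hR,
    isCompact_KPlus_inter_KMinus hA one_lt_two hR,
    KPlus_inter_KMinus_subset_closedBall hA one_lt_two hR⟩

/-- `K_γ = K_γ⁺ ∩ K_γ⁻` is nonempty, compact, and contained in the
closure of `D_{R₀}`, uniformly in `γ`. -/
theorem stmt_16 (Γ : Set HenonMap) (hne : Γ.Nonempty) (hΓ : ParamBounded Γ) :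
    ∃ R₀ : ℝ, 0 < R₀ ∧ ∀ γ : ℤ → HenonMap, (∀ j : ℤ, γ j ∈ Γ) →
      (KPlus γ ∩ KMinus γ).Nonempty ∧ IsCompact (KPlus γ ∩ KMinus γ) ∧
      KPlus γ ∩ KMinus γ ⊆ closure (DDisk R₀) :=
  stmt_16_general Γ hΓ
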